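/- arXiv:2601.07612 — 3 statements merged into one kernel-verified Lean document; each statement's English description precedes it below -/
import Mathlib

section
/- The number of ways to choose t edges from a cycle of length ν₁ so that the chosen edges form exactly s connected components (paths) is at most ν₁ · C(t-1, s-1) · C(ν₁-t-1, s-1), for 1 ≤ s ≤ t < ν₁. -/
open Finset

/-! ### Rank functions on finsets of naturals -/

def rk (T : Finset ℕ) (x : ℕ) : ℕ := (T.filter (· < x)).card

def runA (T : Finset ℕ) : Finset ℕ := T.filter fun m => 0 < m ∧ m - 1 ∉ T

def encA (T : Finset ℕ) : Finset ℕ := (runA T).image fun m => rk T m - 1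

def gapB (n : ℕ) (T : Finset ℕ) : Finset ℕ :=
  (Finset.range n \ T).filter fun x => x + 1 ∈ T

def encB (n : ℕ) (T : Finset ℕ) : Finset ℕ :=
  (gapB n T).image fun x => rk (Finset.range n \ T) x

lemma rk_lt_rk {T : Finset ℕ} {y x : ℕ} (hy : y ∈ T) (hyx : y < x) :
    rk T y < rk T x := by
  apply Finset.card_lt_card
  have hsub : T.filter (· < y) ⊆ T.filter (· < x) := by
    intro z hz
    simp only [Finset.mem_filter] at hz ⊢
    exact ⟨hz.1, by omega⟩
  rw [Finset.ssubset_iff_of_subset hsub]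
  exact ⟨y, Finset.mem_filter.mpr ⟨hy, hyx⟩,
    fun hmem => by simp only [Finset.mem_filter] at hmem; omega⟩

lemma rk_injOn {T : Finset ℕ} {y x : ℕ} (hy : y ∈ T) (hx : x ∈ T)
    (h : rk T y = rk T x) : y = x := by
  rcases lt_trichotomy y x with hlt | heq | hgt
  · exact absurd h (Nat.ne_of_lt (rk_lt_rk hy hlt))
  · exact heq
  · exact absurd h.symm (Nat.ne_of_lt (rk_lt_rk hx hgt))

lemma rk_lt_card {T : Finset ℕ} {y : ℕ} (hy : y ∈ T) : rk T y < T.card := by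
  apply Finset.card_lt_card
  rw [Finset.ssubset_iff_of_subset (Finset.filter_subset _ _)]
  exact ⟨y, hy, fun hmem => by simp only [Finset.mem_filter] at hmem; omega⟩

lemma rk_image {T : Finset ℕ} : T.image (rk T) = Finset.range T.card := by
  apply Finset.eq_of_subset_of_card_le
  · intro m hm
    obtain ⟨y, hy, rfl⟩ := Finset.mem_image.mp hm
    exact Finset.mem_range.mpr (rk_lt_card hy)
  · rw [Finset.card_range, Finset.card_image_of_injOn fun y hy x hx h => rk_injOn hy hx h]

lemma rk_compl_add {n : ℕ} {T : Finset ℕ} (hsub : T ⊆ Finset.range n) {x : ℕ}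
    (hx : x ≤ n) : rk T x + rk (Finset.range n \ T) x = x := by
  unfold rk
  have hdis : Disjoint (T.filter (· < x)) ((Finset.range n \ T).filter (· < x)) := by
    simp only [Finset.disjoint_left, Finset.mem_filter, Finset.mem_sdiff]
    rintro a ⟨ha, -⟩ ⟨⟨-, ha2⟩, -⟩
    exact ha2 ha
  have hU : T.filter (· < x) ∪ (Finset.range n \ T).filter (· < x) = Finset.range x := by
    ext y
    simp only [Finset.mem_union, Finset.mem_filter, Finset.mem_sdiff, Finset.mem_range]
    constructor
    · rintro (⟨-, h⟩ | ⟨-, h⟩) <;> exact h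
    · intro hy
      by_cases hT : y ∈ T
      · exact Or.inl ⟨hT, hy⟩
      · exact Or.inr ⟨⟨by omega, hT⟩, hy⟩
  rw [← Finset.card_union_of_disjoint hdis, hU, Finset.card_range]

/-- Local characterization of membership in `T` in terms of the prefix data. -/
lemma mem_iff_code {n t : ℕ} {T : Finset ℕ} (hsub : T ⊆ Finset.range n)
    (hcard : T.card = t) (h0 : 0 ∈ T) {x : ℕ} (hx1 : 1 ≤ x) (hxn : x < n) :
    (x ∈ T ↔ (if x - 1 ∈ T then rk T x < t ∧ rk T x - 1 ∉ encA T
             else x - 1 - rk T x ∈ encB n T)) := by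
  by_cases hprev : x - 1 ∈ T
  · rw [if_pos hprev]
    constructor
    · intro hxT
      refine ⟨hcard ▸ rk_lt_card hxT, fun hA => ?_⟩
      obtain ⟨m, hm, hmv⟩ := Finset.mem_image.mp hA
      obtain ⟨hmT, hm0, hm1⟩ := Finset.mem_filter.mp hm
      have hrm : 1 ≤ rk T m := Finset.card_pos.mpr ⟨0, Finset.mem_filter.mpr ⟨h0, hm0⟩⟩
      have hrx : 1 ≤ rk T x :=
        Finset.card_pos.mpr ⟨0, Finset.mem_filter.mpr ⟨h0, by omega⟩⟩
      have heq : rk T m = rk T x := by omega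
      have := rk_injOn hmT hxT heq
      subst this
      exact hm1 hprev
    · rintro ⟨hlt, hA⟩
      by_contra hxT
      have hmem : rk T x ∈ T.image (rk T) := by
        rw [rk_image, hcard]
        exact Finset.mem_range.mpr hlt
      obtain ⟨y, hyT, hy⟩ := Finset.mem_image.mp hmem
      have hxy : x < y := by
        rcases lt_trichotomy y x with h | h | h
        · have := rk_lt_rk hyT h; omega
        · exact absurd (h ▸ hyT) hxT
        · exact h
      have hy1 : y - 1 ∉ T := by
        intro hz
        have hlt2 : rk T x < rk T y := by
          apply Finset.card_lt_card
          have hsub2 : T.filter (· < x) ⊆ T.filter (· < y) := by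
            intro z hz2
            simp only [Finset.mem_filter] at hz2 ⊢
            exact ⟨hz2.1, by omega⟩
          rw [Finset.ssubset_iff_of_subset hsub2]
          exact ⟨y - 1, Finset.mem_filter.mpr ⟨hz, by omega⟩,
            fun hmem2 => by simp only [Finset.mem_filter] at hmem2; omega⟩
        omega
      apply hA
      refine Finset.mem_image.mpr ⟨y, ?_, by rw [hy]⟩
      exact Finset.mem_filter.mpr ⟨hyT, by omega, hy1⟩
  · rw [if_neg hprev]
    have hrkeq : rk T (x - 1) = rk T x := by
      unfold rk
      congr 1
      ext y
      simp only [Finset.mem_filter]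
      constructor
      · rintro ⟨hyT, hy⟩
        exact ⟨hyT, by omega⟩
      · rintro ⟨hyT, hy⟩
        refine ⟨hyT, ?_⟩
        rcases Nat.lt_or_ge y (x - 1) with h | h
        · exact h
        · exfalso
          have : y = x - 1 := by omega
          exact hprev (this ▸ hyT)
    have hadd := rk_compl_add hsub (show x - 1 ≤ n by omega)
    have hcr : rk (Finset.range n \ T) (x - 1) = x - 1 - rk T x := by omega
    constructor
    · intro hxT
      rw [← hcr]
      refine Finset.mem_image.mpr ⟨x - 1, ?_, rfl⟩
      refine Finset.mem_filter.mpr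
        ⟨Finset.mem_sdiff.mpr ⟨Finset.mem_range.mpr (by omega), hprev⟩, ?_⟩
      rwa [Nat.sub_add_cancel hx1]
    · intro hmem
      rw [← hcr] at hmem
      obtain ⟨z, hz, hzv⟩ := Finset.mem_image.mp hmem
      obtain ⟨hz2, hz1⟩ := Finset.mem_filter.mp hz
      have hx1' : x - 1 ∈ Finset.range n \ T :=
        Finset.mem_sdiff.mpr ⟨Finset.mem_range.mpr (by omega), hprev⟩
      have hzeq : z = x - 1 := rk_injOn hz2 hx1' hzv
      subst hzeq
      rwa [Nat.sub_add_cancel hx1] at hz1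

/-- Reconstruction: a good set is determined by its code `(encA, encB)`. -/
lemma recon {n t : ℕ} {T₁ T₂ : Finset ℕ} (hsub₁ : T₁ ⊆ Finset.range n)
    (hsub₂ : T₂ ⊆ Finset.range n) (hc₁ : T₁.card = t) (hc₂ : T₂.card = t)
    (h0₁ : 0 ∈ T₁) (h0₂ : 0 ∈ T₂)
    (hA : encA T₁ = encA T₂) (hB : encB n T₁ = encB n T₂) : T₁ = T₂ := by
  ext x
  induction x using Nat.strong_induction_on with
  | _ x ih =>
    rcases Nat.eq_zero_or_pos x with rfl | hx1
    · simp [h0₁, h0₂]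
    rcases Nat.lt_or_ge x n with hxn | hxn
    · have hrk : rk T₁ x = rk T₂ x := by
        unfold rk
        congr 1
        ext y
        simp only [Finset.mem_filter]
        constructor
        · rintro ⟨hy, h⟩
          exact ⟨(ih y h).mp hy, h⟩
        · rintro ⟨hy, h⟩
          exact ⟨(ih y h).mpr hy, h⟩
      have hprev : (x - 1 ∈ T₁) ↔ (x - 1 ∈ T₂) := ih (x - 1) (by omega)
      rw [mem_iff_code hsub₁ hc₁ h0₁ hx1 hxn, mem_iff_code hsub₂ hc₂ h0₂ hx1 hxn,
        hrk, hA, hB]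
      by_cases h : x - 1 ∈ T₁
      · rw [if_pos h, if_pos (hprev.mp h)]
      · rw [if_neg h, if_neg (fun hh => h (hprev.mpr hh))]
    · constructor <;> intro h
      · exact absurd (Finset.mem_range.mp (hsub₁ h)) (by omega)
      · exact absurd (Finset.mem_range.mp (hsub₂ h)) (by omega)

lemma encA_subset {t : ℕ} {T : Finset ℕ} (hcard : T.card = t) (h0 : 0 ∈ T) :
    encA T ⊆ Finset.range (t - 1) := by
  intro m hm
  obtain ⟨y, hy, rfl⟩ := Finset.mem_image.mp hm
  obtain ⟨hyT, hy0, -⟩ := Finset.mem_filter.mp hy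
  have h1 : 1 ≤ rk T y := Finset.card_pos.mpr ⟨0, Finset.mem_filter.mpr ⟨h0, hy0⟩⟩
  have h2 : rk T y < t := hcard ▸ rk_lt_card hyT
  exact Finset.mem_range.mpr (by omega)

lemma encA_card {T : Finset ℕ} (h0 : 0 ∈ T) : (encA T).card = (runA T).card := by
  apply Finset.card_image_of_injOn
  intro m hm m' hm' h
  dsimp only at h
  obtain ⟨hmT, hm0, -⟩ := Finset.mem_filter.mp hm
  obtain ⟨hmT', hm0', -⟩ := Finset.mem_filter.mp hm'
  have h1 : 1 ≤ rk T m := Finset.card_pos.mpr ⟨0, Finset.mem_filter.mpr ⟨h0, hm0⟩⟩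
  have h1' : 1 ≤ rk T m' := Finset.card_pos.mpr ⟨0, Finset.mem_filter.mpr ⟨h0, hm0'⟩⟩
  exact rk_injOn hmT hmT' (by omega)

lemma gapB_image {n : ℕ} {T : Finset ℕ} (hsub : T ⊆ Finset.range n) :
    (gapB n T).image (· + 1) = runA T := by
  ext m
  simp only [gapB, runA, Finset.mem_image, Finset.mem_filter, Finset.mem_sdiff,
    Finset.mem_range]
  constructor
  · rintro ⟨x, ⟨⟨hxn, hxT⟩, hx1⟩, rfl⟩
    exact ⟨hx1, by omega, by simpa using hxT⟩
  · rintro ⟨hmT, hm0, hm1⟩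
    refine ⟨m - 1, ⟨⟨?_, hm1⟩, ?_⟩, by omega⟩
    · have := hsub hmT
      simp only [Finset.mem_range] at this
      omega
    · rwa [Nat.sub_add_cancel hm0]

lemma gapB_card {n : ℕ} {T : Finset ℕ} (hsub : T ⊆ Finset.range n) :
    (gapB n T).card = (runA T).card := by
  rw [← gapB_image hsub]
  exact (Finset.card_image_of_injOn (fun a _ b _ h => by omega)).symm

lemma encB_card {n : ℕ} {T : Finset ℕ} : (encB n T).card = (gapB n T).card :=
  Finset.card_image_of_injOn fun x hx x' hx' h =>
    rk_injOn (Finset.mem_filter.mp hx).1 (Finset.mem_filter.mp hx').1 h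

lemma encB_subset {n t : ℕ} {T : Finset ℕ} (hsub : T ⊆ Finset.range n)
    (hcard : T.card = t) (hn1 : n - 1 ∉ T) (hn : 1 ≤ n) :
    encB n T ⊆ Finset.range (n - t - 1) := by
  intro b hb
  obtain ⟨x, hx, rfl⟩ := Finset.mem_image.mp hb
  obtain ⟨hxc, hx1⟩ := Finset.mem_filter.mp hx
  have hcomp : (Finset.range n \ T).card = n - t := by
    rw [Finset.card_sdiff_of_subset hsub, Finset.card_range, hcard]
  have hxn : x + 1 < n := Finset.mem_range.mp (hsub hx1)
  have hne : x ≠ n - 1 := by omega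
  have hmem_n1 : n - 1 ∈ Finset.range n \ T :=
    Finset.mem_sdiff.mpr ⟨Finset.mem_range.mpr (by omega), hn1⟩
  have hsub2 : (Finset.range n \ T).filter (· < x) ⊆
      ((Finset.range n \ T).erase (n - 1)).erase x := by
    intro y hy
    obtain ⟨hyc, hyx⟩ := Finset.mem_filter.mp hy
    exact Finset.mem_erase.mpr ⟨by omega, Finset.mem_erase.mpr ⟨by omega, hyc⟩⟩
  have hle := Finset.card_le_card hsub2
  rw [Finset.card_erase_of_mem (Finset.mem_erase.mpr ⟨hne, hxc⟩),
      Finset.card_erase_of_mem hmem_n1, hcomp] at hle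
  have h2 : 2 ≤ n - t := by
    have hss : ({x, n - 1} : Finset ℕ) ⊆ Finset.range n \ T := by
      intro y hy
      simp only [Finset.mem_insert, Finset.mem_singleton] at hy
      rcases hy with rfl | rfl
      exacts [hxc, hmem_n1]
    have := Finset.card_le_card hss
    rwa [Finset.card_pair hne, hcomp] at this
  refine Finset.mem_range.mpr ?_
  unfold rk
  omega

/-! ### ZMod translation -/

lemma zmod_val_sub_one {n : ℕ} [NeZero n] {u : ZMod n} (hu : u ≠ 0) :
    (u - 1).val = u.val - 1 := by
  have h1 : 0 < u.val := ZMod.val_pos.mpr hu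
  have hlt := ZMod.val_lt u
  have hcast : ((u.val : ℕ) : ZMod n) = u := ZMod.natCast_rightInverse u
  have heq : u - 1 = ((u.val - 1 : ℕ) : ZMod n) := by
    rw [Nat.cast_sub h1, hcast, Nat.cast_one]
  rw [heq, ZMod.val_cast_of_lt (by omega)]

lemma g_inj {n : ℕ} [NeZero n] (a : ZMod n) :
    Function.Injective (fun x : ZMod n => (x - a).val) := by
  intro x y h
  have h2 : x - a = y - a := ZMod.val_injective n h
  exact sub_left_injective h2

lemma g_sub_one {n : ℕ} [NeZero n] {a x : ZMod n} (hxa : x ≠ a) :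
    (x - 1 - a).val = (x - a).val - 1 := by
  have hr : x - 1 - a = (x - a) - 1 := by ring
  rw [hr, zmod_val_sub_one (sub_ne_zero_of_ne hxa)]

lemma runA_image {n : ℕ} [NeZero n] {S : Finset (ZMod n)} {a : ZMod n}
    (ha : a ∈ S.filter fun i => i - 1 ∉ S) :
    runA (S.image fun x => (x - a).val)
      = ((S.filter fun i => i - 1 ∉ S).erase a).image fun x => (x - a).val := by
  obtain ⟨haS, ha1⟩ := Finset.mem_filter.mp ha
  ext m
  simp only [runA, Finset.mem_filter, Finset.mem_image, Finset.mem_erase]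
  constructor
  · rintro ⟨⟨x, hxS, rfl⟩, hm0, hm1⟩
    have hxa : x ≠ a := by
      rintro rfl
      simp at hm0
    refine ⟨x, ⟨hxa, hxS, ?_⟩, rfl⟩
    intro hx1S
    exact hm1 ⟨x - 1, hx1S, g_sub_one hxa⟩
  · rintro ⟨x, ⟨hxa, hxS, hx1⟩, rfl⟩
    refine ⟨⟨x, hxS, rfl⟩, ZMod.val_pos.mpr (sub_ne_zero_of_ne hxa), ?_⟩
    rintro ⟨y, hyS, hy⟩
    have hyv : (y - a).val = (x - 1 - a).val := by
      rw [g_sub_one hxa]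
      exact hy
    have : y = x - 1 := g_inj a hyv
    exact hx1 (this ▸ hyS)

/-! ### Auxiliary selection functions -/

def aF {n : ℕ} [NeZero n] (S : Finset (ZMod n)) : ZMod n :=
  if h : (S.filter fun i => i - 1 ∉ S).Nonempty
  then ((((S.filter fun i => i - 1 ∉ S).image ZMod.val).min' (h.image _) : ℕ) : ZMod n)
  else 0

lemma aF_mem {n : ℕ} [NeZero n] {S : Finset (ZMod n)}
    (h : (S.filter fun i => i - 1 ∉ S).Nonempty) :
    aF S ∈ S.filter fun i => i - 1 ∉ S := by
  rw [aF, dif_pos h]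
  have hm := Finset.min'_mem ((S.filter fun i => i - 1 ∉ S).image ZMod.val) (h.image _)
  obtain ⟨r, hr, hrv⟩ := Finset.mem_image.mp hm
  rw [← hrv, ZMod.natCast_rightInverse r]
  exact hr

def TF {n : ℕ} [NeZero n] (S : Finset (ZMod n)) : Finset ℕ :=
  S.image fun x => (x - aF S).val

lemma recover {n : ℕ} [NeZero n] (S : Finset (ZMod n)) :
    (TF S).image (fun m : ℕ => (m : ZMod n) + aF S) = S := by
  rw [TF, Finset.image_image]
  have hfun : ((fun m : ℕ => (m : ZMod n) + aF S) ∘ fun x : ZMod n => (x - aF S).val) = id := by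
    funext x
    simp only [Function.comp_apply, id_eq]
    rw [ZMod.natCast_rightInverse (x - aF S), sub_add_cancel]
  rw [hfun, Finset.image_id]

def phiF (n : ℕ) [NeZero n] (S : Finset (ZMod n)) : ZMod n × Finset ℕ × Finset ℕ :=
  (aF S, encA (TF S), encB n (TF S))

/-- All the facts about `TF S` for a good selection `S`. -/
lemma TF_props {n t s : ℕ} [NeZero n] (hn : 2 ≤ n) (hs : 1 ≤ s)
    {S : Finset (ZMod n)} (hc : S.card = t)
    (hrs : (S.filter fun i => i - 1 ∉ S).card = s) :
    TF S ⊆ Finset.range n ∧ (TF S).card = t ∧ 0 ∈ TF S ∧ n - 1 ∉ TF S ∧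
      (runA (TF S)).card = s - 1 := by
  have hne : (S.filter fun i => i - 1 ∉ S).Nonempty :=
    Finset.card_pos.mp (by rw [hrs]; omega)
  have ha := aF_mem hne
  obtain ⟨haS, ha1⟩ := Finset.mem_filter.mp ha
  refine ⟨?_, ?_, ?_, ?_, ?_⟩
  · intro m hm
    obtain ⟨x, hxS, rfl⟩ := Finset.mem_image.mp hm
    exact Finset.mem_range.mpr (ZMod.val_lt _)
  · rw [TF, Finset.card_image_of_injective _ (g_inj (aF S)), hc]
  · exact Finset.mem_image.mpr ⟨aF S, haS, by simp⟩
  · rintro hmem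
    obtain ⟨x, hxS, hxv⟩ := Finset.mem_image.mp hmem
    have hxe : x - aF S = ((n - 1 : ℕ) : ZMod n) := by
      rw [← hxv, ZMod.natCast_rightInverse]
    have hcast : ((n - 1 : ℕ) : ZMod n) = -1 := by
      rw [Nat.cast_sub (by omega : 1 ≤ n), ZMod.natCast_self, Nat.cast_one, zero_sub]
    rw [hcast] at hxe
    have hx : x = aF S - 1 := by linear_combination hxe
    exact ha1 (hx ▸ hxS)
  · rw [TF, runA_image ha, Finset.card_image_of_injective _ (g_inj (aF S)),
      Finset.card_erase_of_mem ha, hrs]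

/-- The number of ways to choose `t` edges from a cycle of length `ν₁` so that the
chosen edges form exactly `s` connected components (paths) is at most
`ν₁ · C(t-1, s-1) · C(ν₁-t-1, s-1)`, for `1 ≤ s ≤ t < ν₁`.

The cycle's edges are indexed by `ZMod ν₁`, edge `i` joining vertices `i` and `i+1`;
a selection `S` of edges has exactly `s` components iff exactly `s` elements `i ∈ S`
have `i - 1 ∉ S` (each such `i` starts a maximal run). -/
theorem stmt1 (ν₁ t s : ℕ) (hs : 1 ≤ s) (hst : s ≤ t) (ht : t < ν₁) :
    {S : Finset (ZMod ν₁) | S.card = t ∧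
        (S.filter (fun i => i - 1 ∉ S)).card = s}.ncard
      ≤ ν₁ * (t - 1).choose (s - 1) * (ν₁ - t - 1).choose (s - 1) := by
  have hn2 : 2 ≤ ν₁ := by omega
  haveI : NeZero ν₁ := ⟨by omega⟩
  set D : Finset (ZMod ν₁ × Finset ℕ × Finset ℕ) :=
    (Finset.univ : Finset (ZMod ν₁)) ×ˢ
      ((Finset.range (t - 1)).powersetCard (s - 1) ×ˢ
        (Finset.range (ν₁ - t - 1)).powersetCard (s - 1)) with hD
  have hmaps : ∀ S ∈ {S : Finset (ZMod ν₁) | S.card = t ∧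
      (S.filter (fun i => i - 1 ∉ S)).card = s}, phiF ν₁ S ∈ (D : Set _) := by
    rintro S ⟨hc, hrs⟩
    obtain ⟨hTsub, hTcard, hT0, hTn1, hruns⟩ := TF_props hn2 hs hc hrs
    simp only [hD, phiF, Finset.coe_product, Set.mem_prod, Finset.mem_coe,
      Finset.mem_univ, Finset.mem_powersetCard, true_and]
    refine ⟨⟨encA_subset hTcard hT0, ?_⟩, encB_subset hTsub hTcard hTn1 (by omega), ?_⟩
    · rw [encA_card hT0, hruns]
    · rw [encB_card, gapB_card hTsub, hruns]
  have hinj : Set.InjOn (phiF ν₁) {S : Finset (ZMod ν₁) | S.card = t ∧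
      (S.filter (fun i => i - 1 ∉ S)).card = s} := by
    rintro S₁ ⟨hc₁, hrs₁⟩ S₂ ⟨hc₂, hrs₂⟩ heq
    simp only [phiF, Prod.mk.injEq] at heq
    obtain ⟨ha, hA, hB⟩ := heq
    obtain ⟨hTsub₁, hTcard₁, hT0₁, -, -⟩ := TF_props hn2 hs hc₁ hrs₁
    obtain ⟨hTsub₂, hTcard₂, hT0₂, -, -⟩ := TF_props hn2 hs hc₂ hrs₂
    have hT : TF S₁ = TF S₂ :=
      recon hTsub₁ hTsub₂ hTcard₁ hTcard₂ hT0₁ hT0₂ hA hB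
    rw [← recover S₁, ← recover S₂, hT, ha]
  have hcard : (D.card : ℕ) = ν₁ * (t - 1).choose (s - 1) * (ν₁ - t - 1).choose (s - 1) := by
    simp only [hD, Finset.card_product, Finset.card_powersetCard, Finset.card_range,
      Finset.card_univ, ZMod.card, mul_assoc]
  have h1 := Set.ncard_le_ncard_of_injOn (phiF ν₁) hmaps hinj D.finite_toSet
  rwa [Set.ncard_coe_finset, hcard] at h1
end

section
/- For all x ∈ [0,1]ⁿ, the product over unordered pairs (i,j) not in the perfect matching Π of (1 - xᵢxⱼ) is at most e^{81/16} · exp(-(∑ᵢ xᵢ)²/2). -/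
open Finset


lemma exp_factor {t : ℝ} (h0 : 0 ≤ t) (h1 : t ≤ 1) :
    1 - t ≤ Real.exp (-(t + t ^ 2 / 2)) := by
  have habs : |(-t)| ≤ 1 := by rw [abs_neg, abs_of_nonneg h0]; exact h1
  have hb := Real.exp_bound habs (n := 3) (by norm_num)
  have hsum : ∑ m ∈ Finset.range 3, (-t) ^ m / (m.factorial : ℝ) = 1 - t + t ^ 2 / 2 := by
    simp [Finset.sum_range_succ, Nat.factorial]
    ring
  rw [hsum, abs_neg, abs_of_nonneg h0] at hb
  norm_num [Nat.factorial] at hb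
  have h2 : 1 - t + t ^ 2 / 2 - 2 * t ^ 3 / 9 ≤ Real.exp (-t) := by
    have := (abs_le.mp hb).1
    nlinarith
  have h3 : 1 - t ^ 2 / 2 ≤ Real.exp (-(t ^ 2 / 2)) := by
    linarith [Real.add_one_le_exp (-(t ^ 2 / 2))]
  have heq : Real.exp (-(t + t ^ 2 / 2)) = Real.exp (-t) * Real.exp (-(t ^ 2 / 2)) := by
    rw [← Real.exp_add]; ring_nf
  rw [heq]
  have hp1 : (0:ℝ) ≤ 1 - t + t ^ 2 / 2 - 2 * t ^ 3 / 9 := by nlinarith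
  have hp2 : (0:ℝ) ≤ 1 - t ^ 2 / 2 := by nlinarith
  calc 1 - t ≤ (1 - t + t ^ 2 / 2 - 2 * t ^ 3 / 9) * (1 - t ^ 2 / 2) := by
        have key : (0:ℝ) ≤ 5 / 18 - t / 4 + t ^ 2 / 9 := by nlinarith [sq_nonneg (t - 9/8)]
        nlinarith [mul_nonneg (pow_nonneg h0 3) key]
    _ ≤ Real.exp (-t) * Real.exp (-(t ^ 2 / 2)) :=
        mul_le_mul h2 h3 hp2 (Real.exp_nonneg _)


lemma pairsum {n : ℕ} (f : Fin n → Fin n) (hinv : ∀ i, f (f i) = i)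
    (hfix : ∀ i, f i ≠ i) (y : Fin n → ℝ) :
    2 * ∑ i : Fin n, ∑ j ∈ univ.filter (fun j => i < j ∧ f i ≠ j), y i * y j
      = (∑ i : Fin n, y i) ^ 2 - ∑ i : Fin n, y i ^ 2 - ∑ i : Fin n, y i * y (f i) := by
  have hfe : ∀ a b : Fin n, (f a = b) ↔ (f b = a) := by
    intro a b
    constructor <;> intro h <;> rw [← h, hinv]
  have e1 : ∑ i : Fin n, ∑ j ∈ univ.filter (fun j => i < j ∧ f i ≠ j), y i * y j
      = ∑ i : Fin n, ∑ j : Fin n, if i < j ∧ f i ≠ j then y i * y j else 0 := by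
    refine Finset.sum_congr rfl fun i _ => ?_
    rw [Finset.sum_filter]
  have e2 : ∑ i : Fin n, ∑ j : Fin n, (if i < j ∧ f i ≠ j then y i * y j else 0)
      = ∑ i : Fin n, ∑ j : Fin n, if j < i ∧ f i ≠ j then y i * y j else 0 := by
    rw [Finset.sum_comm]
    refine Finset.sum_congr rfl fun i _ => Finset.sum_congr rfl fun j _ => ?_
    refine if_congr ?_ (mul_comm _ _) rfl
    constructor
    · rintro ⟨h1, h2⟩; exact ⟨h1, fun hc => h2 ((hfe i j).mp hc)⟩
    · rintro ⟨h1, h2⟩; exact ⟨h1, fun hc => h2 ((hfe j i).mp hc)⟩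
  have e3 : ∀ i j : Fin n,
      ((if i < j ∧ f i ≠ j then y i * y j else 0) + (if j < i ∧ f i ≠ j then y i * y j else 0))
      = if i ≠ j ∧ f i ≠ j then y i * y j else 0 := by
    intro i j
    by_cases hc : f i = j
    · simp [hc]
    · rcases lt_trichotomy i j with h | h | h
      · simp [h, hc, h.ne, asymm h]
      · simp [h, lt_irrefl]
      · simp [h, hc, h.ne', asymm h]
  have e4 : ∀ i : Fin n, (∑ j : Fin n, if i ≠ j ∧ f i ≠ j then y i * y j else 0)
      = (∑ j : Fin n, y i * y j) - (y i * y i + y i * y (f i)) := by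
    intro i
    rw [← Finset.sum_filter]
    have hset : univ.filter (fun j => i ≠ j ∧ f i ≠ j) = univ \ {i, f i} := by
      ext j
      simp only [mem_filter, mem_univ, true_and, mem_sdiff, mem_insert, mem_singleton]
      constructor
      · rintro ⟨h1, h2⟩; push_neg; exact ⟨fun h => h1 h.symm, fun h => h2 h.symm⟩
      · intro h; push_neg at h; exact ⟨fun h' => h.1 h'.symm, fun h' => h.2 h'.symm⟩
    rw [hset, Finset.sum_sdiff_eq_sub (Finset.subset_univ _),
      Finset.sum_pair (Ne.symm (hfix i))]
  have e5 : ∑ i : Fin n, ∑ j : Fin n, y i * y j = (∑ i : Fin n, y i) ^ 2 := by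
    rw [sq, Finset.sum_mul_sum]
  calc 2 * ∑ i : Fin n, ∑ j ∈ univ.filter (fun j => i < j ∧ f i ≠ j), y i * y j
      = (∑ i : Fin n, ∑ j : Fin n, if i < j ∧ f i ≠ j then y i * y j else 0)
        + ∑ i : Fin n, ∑ j : Fin n, (if j < i ∧ f i ≠ j then y i * y j else 0) := by
        rw [e1]; rw [← e2]; ring
    _ = ∑ i : Fin n, ∑ j : Fin n, if i ≠ j ∧ f i ≠ j then y i * y j else 0 := by
        rw [← Finset.sum_add_distrib]
        refine Finset.sum_congr rfl fun i _ => ?_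
        rw [← Finset.sum_add_distrib]
        exact Finset.sum_congr rfl fun j _ => e3 i j
    _ = ∑ i : Fin n, ((∑ j : Fin n, y i * y j) - (y i * y i + y i * y (f i))) :=
        Finset.sum_congr rfl fun i _ => e4 i
    _ = (∑ i : Fin n, y i) ^ 2 - ∑ i : Fin n, y i ^ 2 - ∑ i : Fin n, y i * y (f i) := by
        rw [Finset.sum_sub_distrib, Finset.sum_add_distrib, e5]
        simp [sq]
        ring

/-- For all `x ∈ [0,1]ⁿ`, the product over unordered pairs `{i,j}` not in the
perfect matching `Π` (given as a fixed-point-free involution `f`) of `(1 - xᵢxⱼ)`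
is at most `e^{81/16} · exp(-(∑ᵢ xᵢ)²/2)`. -/
theorem stmt2 (n : ℕ) (f : Fin n → Fin n) (hinv : ∀ i, f (f i) = i)
    (hfix : ∀ i, f i ≠ i) (x : Fin n → ℝ) (hx : ∀ i, x i ∈ Set.Icc (0:ℝ) 1) :
    ∏ i : Fin n, ∏ j ∈ univ.filter (fun j => i < j ∧ f i ≠ j), (1 - x i * x j)
      ≤ Real.exp (81 / 16) * Real.exp (-(∑ i : Fin n, x i) ^ 2 / 2) := by
  have hx0 : ∀ i, 0 ≤ x i := fun i => (hx i).1
  have hx1 : ∀ i, x i ≤ 1 := fun i => (hx i).2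
  have hnn : ∀ i j : Fin n, 0 ≤ 1 - x i * x j := by
    intro i j
    have := mul_le_one₀ (hx1 i) (hx0 j) (hx1 j)
    linarith
  have hterm : ∀ i j : Fin n,
      1 - x i * x j ≤ Real.exp (-(x i * x j + (x i * x j) ^ 2 / 2)) := fun i j =>
    exp_factor (mul_nonneg (hx0 i) (hx0 j)) (mul_le_one₀ (hx1 i) (hx0 j) (hx1 j))
  set S := ∑ i : Fin n, x i with hS
  -- step 1 : bound by product of exponentials
  have step1 : ∏ i : Fin n, ∏ j ∈ univ.filter (fun j => i < j ∧ f i ≠ j), (1 - x i * x j)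
      ≤ ∏ i : Fin n, ∏ j ∈ univ.filter (fun j => i < j ∧ f i ≠ j),
          Real.exp (-(x i * x j + (x i * x j) ^ 2 / 2)) := by
    refine Finset.prod_le_prod (fun i _ => Finset.prod_nonneg fun j _ => hnn i j)
      (fun i _ => Finset.prod_le_prod (fun j _ => hnn i j) (fun j _ => hterm i j))
  have step2 : ∏ i : Fin n, ∏ j ∈ univ.filter (fun j => i < j ∧ f i ≠ j),
        Real.exp (-(x i * x j + (x i * x j) ^ 2 / 2))
      = Real.exp (∑ i : Fin n, ∑ j ∈ univ.filter (fun j => i < j ∧ f i ≠ j),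
          (-(x i * x j + (x i * x j) ^ 2 / 2))) := by
    rw [Real.exp_sum]
    exact Finset.prod_congr rfl fun i _ => (Real.exp_sum _ _).symm
  -- key sum inequality
  have hA := pairsum f hinv hfix x
  have hB := pairsum f hinv hfix (fun i => x i ^ 2)
  set A := ∑ i : Fin n, ∑ j ∈ univ.filter (fun j => i < j ∧ f i ≠ j), x i * x j with hAdef
  set B := ∑ i : Fin n, ∑ j ∈ univ.filter (fun j => i < j ∧ f i ≠ j), x i ^ 2 * x j ^ 2 with hBdef
  set Q := ∑ i : Fin n, x i ^ 2 with hQdef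
  set C := ∑ i : Fin n, x i * x (f i) with hCdef
  set Q4 := ∑ i : Fin n, (x i ^ 2) ^ 2 with hQ4def
  set C2 := ∑ i : Fin n, x i ^ 2 * x (f i) ^ 2 with hC2def
  have hbij : Function.Bijective f := Function.Involutive.bijective hinv
  have hreindex : ∑ i : Fin n, x (f i) ^ 2 = Q :=
    Fintype.sum_bijective f hbij _ _ (fun i => rfl)
  have hQnn : 0 ≤ Q := Finset.sum_nonneg fun i _ => sq_nonneg _
  have hCQ : C ≤ Q := by
    have : C ≤ (∑ i : Fin n, (x i ^ 2 + x (f i) ^ 2)) / 2 := by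
      rw [Finset.sum_div]
      exact Finset.sum_le_sum fun i _ => by nlinarith [sq_nonneg (x i - x (f i))]
    rw [Finset.sum_add_distrib, hreindex] at this
    linarith
  have hsq1 : ∀ i : Fin n, x i ^ 2 ≤ 1 := fun i => by nlinarith [hx0 i, hx1 i]
  have hQ4Q : Q4 ≤ Q := Finset.sum_le_sum fun i _ => by
    nlinarith [mul_nonneg (sq_nonneg (x i)) (sub_nonneg.mpr (hsq1 i))]
  have hC2Q : C2 ≤ Q := Finset.sum_le_sum fun i _ => by
    nlinarith [mul_nonneg (sq_nonneg (x i)) (sub_nonneg.mpr (hsq1 (f i)))]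
  have hkey : ∑ i : Fin n, ∑ j ∈ univ.filter (fun j => i < j ∧ f i ≠ j),
      (-(x i * x j + (x i * x j) ^ 2 / 2)) ≤ 81 / 16 + -S ^ 2 / 2 := by
    have hsplit : ∑ i : Fin n, ∑ j ∈ univ.filter (fun j => i < j ∧ f i ≠ j),
        (-(x i * x j + (x i * x j) ^ 2 / 2)) = -A - B / 2 := by
      rw [hAdef, hBdef, Finset.sum_div, ← Finset.sum_neg_distrib, ← Finset.sum_sub_distrib]
      refine Finset.sum_congr rfl fun i _ => ?_
      rw [Finset.sum_div, ← Finset.sum_neg_distrib, ← Finset.sum_sub_distrib]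
      exact Finset.sum_congr rfl fun j _ => by ring
    rw [hsplit]
    have h2A : 2 * A = S ^ 2 - Q - C := by rw [hS]; exact hA
    have h2B : 2 * B = Q ^ 2 - Q4 - C2 := hB
    nlinarith [sq_nonneg (Q - 3)]
  calc ∏ i : Fin n, ∏ j ∈ univ.filter (fun j => i < j ∧ f i ≠ j), (1 - x i * x j)
      ≤ Real.exp (∑ i : Fin n, ∑ j ∈ univ.filter (fun j => i < j ∧ f i ≠ j),
          (-(x i * x j + (x i * x j) ^ 2 / 2))) := step2 ▸ step1
    _ ≤ Real.exp (81 / 16 + -S ^ 2 / 2) := Real.exp_le_exp.mpr hkey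
    _ = Real.exp (81 / 16) * Real.exp (-S ^ 2 / 2) := Real.exp_add _ _
end

section
/- Conditioned on the values X_{i,Π(i)} = xᵢ for all i, the probability that the perfect matching Π is stable equals ∏_{{i,j}∉Π} (1 - xᵢxⱼ). -/
/-!
Given the values `xᵢ`, the event that `{i, j}` does not block the matching only involves the
two coordinates `ω (i, j)` and `ω (j, i)`, and distinct pairs involve disjoint coordinates.
Under a product measure, events determined by disjoint sets of coordinates are independent,
so the probability of stability factorises over the pairs. The complement of the event for
`{i, j}` is the box `{ω (i, j) ≤ xᵢ, ω (j, i) ≤ xⱼ}`, of measure `xᵢ xⱼ`.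
-/

open MeasureTheory ProbabilityTheory Finset

section ProductMeasure

variable {ι α κ : Type*} [MeasurableSpace α]

abbrev coordSigma (C : Set ι) : MeasurableSpace (ι → α) :=
  ⨆ i ∈ C, MeasurableSpace.comap (fun ω => ω i) ‹MeasurableSpace α›

lemma coordSigma_mono {C D : Set ι} (h : C ⊆ D) :
    (coordSigma C : MeasurableSpace (ι → α)) ≤ coordSigma D :=
  biSup_mono fun _ hi => h hi

lemma measurable_eval_coordSigma {C : Set ι} {i : ι} (hi : i ∈ C) :
    Measurable[coordSigma C] (fun ω : ι → α => ω i) :=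
  Measurable.of_comap_le (le_iSup₂_of_le i hi le_rfl)

lemma measure_pi_biInter_of_pairwiseDisjoint [Fintype ι] {μ : ι → Measure α}
    [∀ i, IsProbabilityMeasure (μ i)] (K : Finset κ) (C : κ → Set ι)
    (hC : (K : Set κ).PairwiseDisjoint C) (E : κ → Set (ι → α))
    (hE : ∀ k ∈ K, MeasurableSet[coordSigma (C k)] (E k)) :
    Measure.pi μ (⋂ k ∈ K, E k) = ∏ k ∈ K, Measure.pi μ (E k) := by
  classical
  have hindep : iIndep (fun i => MeasurableSpace.comap (fun ω : ι → α => ω i) ‹_›)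
      (Measure.pi μ) :=
    (iIndepFun_pi (X := fun _ => id) (fun _ => aemeasurable_id)).iIndep
  induction K using Finset.induction_on with
  | empty => simp
  | insert k K hk ih =>
    have hCK : Disjoint (C k) (⋃ l ∈ K, C l) :=
      Set.disjoint_iUnion₂_right.2 fun l hl =>
        hC (by simp) (by simp [hl]) (by rintro rfl; exact hk hl)
    have hEK : MeasurableSet[coordSigma (⋃ l ∈ K, C l)] (⋂ l ∈ K, E l) :=
      MeasurableSet.biInter K.countable_toSet fun l hl =>
        coordSigma_mono (Set.subset_biUnion_of_mem hl) _ (hE l (mem_insert_of_mem hl))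
    rw [Finset.set_biInter_insert, prod_insert hk,
      (Indep_iff _ _ _).1 (indep_iSup_of_disjoint (fun i => (measurable_pi_apply i).comap_le)
        hindep hCK) _ _ (hE k (by simp)) hEK,
      ih (hC.subset (by simp)) fun l hl => hE l (by simp [hl])]

lemma measure_pi_setOf_or [Fintype ι] [DecidableEq ι] {μ : ι → Measure α}
    [∀ i, IsProbabilityMeasure (μ i)] {a b : ι} (hab : a ≠ b) {A B : Set α}
    (hA : MeasurableSet A) (hB : MeasurableSet B) :
    Measure.pi μ {ω | ω a ∈ A ∨ ω b ∈ B} = 1 - μ a Aᶜ * μ b Bᶜ := by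
  have hbox : {ω : ι → α | ω a ∈ A ∨ ω b ∈ B}ᶜ
      = Set.univ.pi fun i => if i = a then Aᶜ else if i = b then Bᶜ else Set.univ := by
    ext ω
    simp only [Set.mem_compl_iff, Set.mem_ofPred_eq, not_or, Set.mem_univ_pi]
    refine ⟨fun h i => ?_, fun h => ⟨by simpa using h a, by simpa [hab.symm] using h b⟩⟩
    split_ifs with hia hib
    · exact hia ▸ h.1
    · exact hib ▸ h.2
    · trivial
  have hmeas : MeasurableSet {ω : ι → α | ω a ∈ A ∨ ω b ∈ B} :=
    (hA.preimage (measurable_pi_apply a)).union (hB.preimage (measurable_pi_apply b))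
  rw [← compl_compl {ω : ι → α | ω a ∈ A ∨ ω b ∈ B}, prob_compl_eq_one_sub hmeas.compl, hbox,
    Measure.pi_pi, prod_eq_mul a b hab (fun c _ hc => by simp [hc.1, hc.2]) (by simp)
      (by simp)]
  simp [hab.symm]

end ProductMeasure

lemma pairwiseDisjoint_pair_swap {ι : Type*} [LinearOrder ι] {S : Set (ι × ι)}
    (hS : ∀ p ∈ S, p.1 < p.2) : S.PairwiseDisjoint fun p => ({p, p.swap} : Set (ι × ι)) := by
  intro p hp q hq hpq
  have hpS := hS p hp
  have hqS := hS q hq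
  simp only [Function.onFun, Set.disjoint_insert_left, Set.disjoint_insert_right,
    Set.disjoint_singleton, Set.mem_insert_iff, Set.mem_singleton_iff, Prod.ext_iff]
  grind

instance : IsProbabilityMeasure (volume.restrict (Set.Icc (0:ℝ) 1)) := ⟨by simp⟩

lemma volume_restrict_Icc_Iic {s : ℝ} (hs : s ∈ Set.Icc (0:ℝ) 1) :
    volume.restrict (Set.Icc (0:ℝ) 1) (Set.Iic s) = ENNReal.ofReal s := by
  have hinter : Set.Iic s ∩ Set.Icc 0 1 = Set.Icc 0 s := by
    ext t
    simp only [Set.mem_inter_iff, Set.mem_Iic, Set.mem_Icc]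
    exact ⟨fun h => ⟨h.2.1, h.1⟩, fun h => ⟨h.2, h.1, h.2.trans hs.2⟩⟩
  rw [Measure.restrict_apply measurableSet_Iic, hinter, Real.volume_Icc, sub_zero]

lemma measure_pi_uniform_setOf_lt_or_lt {ι : Type*} [Fintype ι] [DecidableEq ι] {a b : ι}
    (hab : a ≠ b) {s t : ℝ} (hs : s ∈ Set.Icc (0:ℝ) 1) (ht : t ∈ Set.Icc (0:ℝ) 1) :
    Measure.pi (fun _ : ι => volume.restrict (Set.Icc (0:ℝ) 1)) {ω | s < ω a ∨ t < ω b}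
      = ENNReal.ofReal (1 - s * t) := by
  refine (measure_pi_setOf_or hab measurableSet_Ioi measurableSet_Ioi).trans ?_
  rw [Set.compl_Ioi, Set.compl_Ioi, volume_restrict_Icc_Iic hs, volume_restrict_Icc_Iic ht,
    ← ENNReal.ofReal_mul hs.1, ← ENNReal.ofReal_one, ← ENNReal.ofReal_sub _ (mul_nonneg hs.1 ht.1)]

theorem stmt8_general (n : ℕ) (f : Fin n → Fin n)
    (x : Fin n → ℝ) (hx : ∀ i, x i ∈ Set.Icc (0:ℝ) 1) :
    Measure.pi (fun _ : Fin n × Fin n => volume.restrict (Set.Icc (0:ℝ) 1))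
        {ω : Fin n × Fin n → ℝ | ∀ i j : Fin n, i < j → f i ≠ j →
          (x i < ω (i, j) ∨ x j < ω (j, i))}
      = ENNReal.ofReal
          (∏ i : Fin n, ∏ j ∈ univ.filter (fun j => i < j ∧ f i ≠ j),
            (1 - x i * x j)) := by
  set P := univ.filter fun p : Fin n × Fin n => p.1 < p.2 ∧ f p.1 ≠ p.2
  set E : Fin n × Fin n → Set (Fin n × Fin n → ℝ) := fun p => {ω | x p.1 < ω p ∨ x p.2 < ω p.swap}
  have hP : ∀ p ∈ P, p.1 < p.2 := fun p hp => (mem_filter.1 hp).2.1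
  have hevent : {ω : Fin n × Fin n → ℝ | ∀ i j : Fin n, i < j → f i ≠ j →
      (x i < ω (i, j) ∨ x j < ω (j, i))} = ⋂ p ∈ P, E p := by
    ext ω
    simp [P, E]
  have hE : ∀ p ∈ P, MeasurableSet[coordSigma {p, p.swap}] (E p) := fun p _ =>
    (measurable_eval_coordSigma (by simp) measurableSet_Ioi).union
      (measurable_eval_coordSigma (by simp) measurableSet_Ioi)
  rw [hevent, measure_pi_biInter_of_pairwiseDisjoint P _ (pairwiseDisjoint_pair_swap hP) E hE,
    prod_congr rfl fun p hp => measure_pi_uniform_setOf_lt_or_lt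
      (fun h => (hP p hp).ne (congrArg Prod.fst h)) (hx _) (hx _),
    ← ENNReal.ofReal_prod_of_nonneg fun p _ =>
      sub_nonneg.2 (mul_le_one₀ (hx _).2 (hx _).1 (hx _).2), prod_filter, Fintype.prod_prod_type]
  simp_rw [prod_filter]

/-- Preferences are generated by i.i.d. Uniform[0,1] variables `ω (i,j) = X_{i,j}`.
Conditioned on the values `X_{i,Π(i)} = xᵢ` (so that only the variables `X_{i,j}`
for `{i,j} ∉ Π` remain random, i.i.d. uniform on `[0,1]`), the probability that the
perfect matching `Π` (given as a fixed-point-free involution `f`) is stable equals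
`∏_{{i,j}∉Π} (1 - xᵢxⱼ)`. -/
theorem stmt8 (n : ℕ) (f : Fin n → Fin n) (hinv : ∀ i, f (f i) = i)
    (hfix : ∀ i, f i ≠ i) (x : Fin n → ℝ) (hx : ∀ i, x i ∈ Set.Icc (0:ℝ) 1) :
    Measure.pi (fun _ : Fin n × Fin n => volume.restrict (Set.Icc (0:ℝ) 1))
        {ω : Fin n × Fin n → ℝ | ∀ i j : Fin n, i < j → f i ≠ j →
          (x i < ω (i, j) ∨ x j < ω (j, i))}
      = ENNReal.ofReal
          (∏ i : Fin n, ∏ j ∈ univ.filter (fun j => i < j ∧ f i ≠ j),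
            (1 - x i * x j)) :=
  stmt8_general n f x hx
end
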